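/- Let 2/3 ≤ α ≤ 1 and consider an instance of the FSSP with two agents and separate item sets in which every item weight is at most α. Then every Kalai–Smorodinski fair solution x_KS satisfies z* − z(x_KS) ≤ (2 − 1/α) · z*. -/
import Mathlib


/-! Definitions for the Fair Subset Sum Problem (FSSP) with two agents `A` and `B`
owning separate item sets with weights `a : Fin n → ℝ` and `b : Fin m → ℝ`.
A solution is a pair of index subsets; feasibility means the total selected
weight does not exceed the capacity `1`. -/

/-- Total weight of the items of `S`. -/
noncomputable def sumw {n : ℕ} (a : Fin n → ℝ) (S : Finset (Fin n)) : ℝ := ∑ i ∈ S, a i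

/-- A feasible solution of FSSP with separate item sets. -/
def Feas {n m : ℕ} (a : Fin n → ℝ) (b : Fin m → ℝ)
    (x : Finset (Fin n) × Finset (Fin m)) : Prop :=
  sumw a x.1 + sumw b x.2 ≤ 1

/-- Social utility `z(x) = a(x) + b(x)`. -/
noncomputable def zv {n m : ℕ} (a : Fin n → ℝ) (b : Fin m → ℝ)
    (x : Finset (Fin n) × Finset (Fin m)) : ℝ :=
  sumw a x.1 + sumw b x.2

/-- Pareto efficient feasible solution. -/
def Pareto {n m : ℕ} (a : Fin n → ℝ) (b : Fin m → ℝ)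
    (x : Finset (Fin n) × Finset (Fin m)) : Prop :=
  Feas a b x ∧ ¬ ∃ y, Feas a b y ∧ sumw a x.1 ≤ sumw a y.1 ∧ sumw b x.2 ≤ sumw b y.2 ∧
    (sumw a x.1 < sumw a y.1 ∨ sumw b x.2 < sumw b y.2)

/-- System optimum: a feasible solution maximizing the social utility. -/
def SysOpt {n m : ℕ} (a : Fin n → ℝ) (b : Fin m → ℝ)
    (x : Finset (Fin n) × Finset (Fin m)) : Prop :=
  Feas a b x ∧ ∀ y, Feas a b y → zv a b y ≤ zv a b x

/-- Maximin fair solution: Pareto efficient and maximizing `min{a(x), b(x)}`. -/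
def Maximin {n m : ℕ} (a : Fin n → ℝ) (b : Fin m → ℝ)
    (x : Finset (Fin n) × Finset (Fin m)) : Prop :=
  Pareto a b x ∧ ∀ y, Feas a b y →
    min (sumw a y.1) (sumw b y.2) ≤ min (sumw a x.1) (sumw b x.2)

/-- Proportional fair solution. -/
def PropFair {n m : ℕ} (a : Fin n → ℝ) (b : Fin m → ℝ)
    (x : Finset (Fin n) × Finset (Fin m)) : Prop :=
  Feas a b x ∧ 0 < sumw a x.1 ∧ 0 < sumw b x.2 ∧
    ∀ y, Feas a b y → sumw a y.1 / sumw a x.1 + sumw b y.2 / sumw b x.2 ≤ 2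

/-- Kalai–Smorodinski fair solution: Pareto efficient and maximizing
`min{a(x)/â, b(x)/b̂}`, where `â` and `b̂` are the (positive) maximal utilities
each agent can obtain over all feasible solutions. -/
def KSFair {n m : ℕ} (a : Fin n → ℝ) (b : Fin m → ℝ)
    (x : Finset (Fin n) × Finset (Fin m)) : Prop :=
  Pareto a b x ∧ ∃ ahat bhat : ℝ, 0 < ahat ∧ 0 < bhat ∧
    IsGreatest {v | ∃ y, Feas a b y ∧ sumw a y.1 = v} ahat ∧
    IsGreatest {v | ∃ y, Feas a b y ∧ sumw b y.2 = v} bhat ∧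
    ∀ y, Feas a b y →
      min (sumw a y.1 / ahat) (sumw b y.2 / bhat) ≤
        min (sumw a x.1 / ahat) (sumw b x.2 / bhat)

/-- A valid FSSP instance with separate item sets in which every item weight is
nonnegative and at most `α`, and the total weight exceeds the capacity `1`. -/
def ValidInst {n m : ℕ} (a : Fin n → ℝ) (b : Fin m → ℝ) (α : ℝ) : Prop :=
  (∀ i, 0 ≤ a i) ∧ (∀ i, 0 ≤ b i) ∧ (∀ i, a i ≤ α) ∧ (∀ i, b i ≤ α) ∧
    1 < (∑ i, a i) + (∑ i, b i)

/-! ### Auxiliary lemmas -/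

/-- Greedy selection: from a finite family of nonnegative weights, each at most `c`,
whose total exceeds `θ ≥ 0`, one can select a subfamily whose total lies in `(θ, θ+c]`. -/
lemma sum_between_aux {ι : Type*} [DecidableEq ι] (f : ι → ℝ) (c θ : ℝ) (hθ : 0 ≤ θ) :
    ∀ (k : ℕ) (S : Finset ι), S.card ≤ k → (∀ i ∈ S, 0 ≤ f i) → (∀ i ∈ S, f i ≤ c) →
      θ < ∑ i ∈ S, f i → ∃ T, T ⊆ S ∧ θ < ∑ i ∈ T, f i ∧ ∑ i ∈ T, f i ≤ θ + c := by
  intro k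
  induction k with
  | zero =>
      intro S hcard _ _ h
      have hS : S = ∅ := Finset.card_eq_zero.mp (Nat.le_zero.mp hcard)
      subst hS
      simp only [Finset.sum_empty] at h
      linarith
  | succ k ih =>
      intro S hcard hf hc h
      by_cases hex : ∃ i ∈ S, θ < ∑ j ∈ S.erase i, f j
      · obtain ⟨i, hiS, hlt⟩ := hex
        have hcard' : (S.erase i).card ≤ k := by
          have := Finset.card_erase_of_mem hiS
          omega
        obtain ⟨T, hTsub, h1, h2⟩ := ih (S.erase i) hcard'
          (fun j hj => hf j (Finset.mem_of_mem_erase hj))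
          (fun j hj => hc j (Finset.mem_of_mem_erase hj)) hlt
        exact ⟨T, hTsub.trans (Finset.erase_subset _ _), h1, h2⟩
      · push_neg at hex
        have hSne : S.Nonempty := by
          rcases S.eq_empty_or_nonempty with rfl | hne
          · simp only [Finset.sum_empty] at h; linarith
          · exact hne
        obtain ⟨i, hiS⟩ := hSne
        refine ⟨S, Finset.Subset.refl S, h, ?_⟩
        have hsplit := Finset.add_sum_erase S f hiS
        have h1 := hex i hiS
        have h2 := hc i hiS
        linarith

lemma sum_between {ι : Type*} [DecidableEq ι] (f : ι → ℝ) (c θ : ℝ) (hθ : 0 ≤ θ)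
    (S : Finset ι) (hf : ∀ i ∈ S, 0 ≤ f i) (hc : ∀ i ∈ S, f i ≤ c)
    (h : θ < ∑ i ∈ S, f i) :
    ∃ T, T ⊆ S ∧ θ < ∑ i ∈ T, f i ∧ ∑ i ∈ T, f i ≤ θ + c :=
  sum_between_aux f c θ hθ S.card S le_rfl hf hc h

lemma Feas_swap {n m : ℕ} {a : Fin n → ℝ} {b : Fin m → ℝ}
    {x : Finset (Fin n) × Finset (Fin m)} (h : Feas a b x) : Feas b a (x.2, x.1) := by
  have h' : sumw a x.1 + sumw b x.2 ≤ 1 := h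
  show sumw b x.2 + sumw a x.1 ≤ 1
  linarith

lemma Pareto_swap {n m : ℕ} {a : Fin n → ℝ} {b : Fin m → ℝ}
    {x : Finset (Fin n) × Finset (Fin m)} (h : Pareto a b x) : Pareto b a (x.2, x.1) := by
  obtain ⟨hf, hnd⟩ := h
  refine ⟨Feas_swap hf, ?_⟩
  rintro ⟨y, hyf, h1, h2, h3⟩
  exact hnd ⟨(y.2, y.1), Feas_swap hyf, h2, h1, h3.symm⟩

lemma SysOpt_swap {n m : ℕ} {a : Fin n → ℝ} {b : Fin m → ℝ}
    {x : Finset (Fin n) × Finset (Fin m)} (h : SysOpt a b x) : SysOpt b a (x.2, x.1) := by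
  obtain ⟨hf, hmax⟩ := h
  refine ⟨Feas_swap hf, ?_⟩
  intro y hy
  have := hmax (y.2, y.1) (Feas_swap hy)
  have e1 : zv a b (y.2, y.1) = zv b a y := add_comm (sumw a y.2) (sumw b y.1)
  have e2 : zv a b x = zv b a (x.2, x.1) := add_comm (sumw a x.1) (sumw b x.2)
  linarith

lemma KSFair_swap {n m : ℕ} {a : Fin n → ℝ} {b : Fin m → ℝ}
    {x : Finset (Fin n) × Finset (Fin m)} (h : KSFair a b x) : KSFair b a (x.2, x.1) := by
  obtain ⟨hp, ahat, bhat, h1, h2, h3, h4, h5⟩ := h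
  refine ⟨Pareto_swap hp, bhat, ahat, h2, h1, ?_, ?_, ?_⟩
  · constructor
    · obtain ⟨y, hyf, hyv⟩ := h4.1
      exact ⟨(y.2, y.1), Feas_swap hyf, hyv⟩
    · rintro v ⟨y, hyf, rfl⟩
      exact h4.2 ⟨(y.2, y.1), Feas_swap hyf, rfl⟩
  · constructor
    · obtain ⟨y, hyf, hyv⟩ := h3.1
      exact ⟨(y.2, y.1), Feas_swap hyf, hyv⟩
    · rintro v ⟨y, hyf, rfl⟩
      exact h3.2 ⟨(y.2, y.1), Feas_swap hyf, rfl⟩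
  · intro y hy
    have h6 := h5 (y.2, y.1) (Feas_swap hy)
    calc min (sumw b y.1 / bhat) (sumw a y.2 / ahat)
        = min (sumw a y.2 / ahat) (sumw b y.1 / bhat) := min_comm _ _
      _ ≤ min (sumw a x.1 / ahat) (sumw b x.2 / bhat) := h6
      _ = min (sumw b x.2 / bhat) (sumw a x.1 / ahat) := min_comm _ _

/-- If `x` is Pareto efficient with `z(x) < 1/2` and there is an unselected item of
agent `A` with positive weight (at most `α`), then `b(x) > 1 - α`. -/
lemma unselected_big {n m : ℕ} (α : ℝ) (a : Fin n → ℝ) (b : Fin m → ℝ)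
    (ha0 : ∀ i, 0 ≤ a i) (hb0 : ∀ i, 0 ≤ b i) (haα : ∀ i, a i ≤ α)
    (x : Finset (Fin n) × Finset (Fin m)) (hpar : Pareto a b x)
    (hZ : zv a b x < 1/2) (i : Fin n) (hi : i ∉ x.1) (hai : 0 < a i) :
    1 - α < sumw b x.2 := by
  obtain ⟨hxf, hnd⟩ := hpar
  have hA0 : 0 ≤ sumw a x.1 := Finset.sum_nonneg fun j _ => ha0 j
  have hB0 : 0 ≤ sumw b x.2 := Finset.sum_nonneg fun j _ => hb0 j
  have hxf' : sumw a x.1 + sumw b x.2 ≤ 1 := hxf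
  have hZ' : sumw a x.1 + sumw b x.2 < 1/2 := hZ
  have hins : sumw a (insert i x.1) = a i + sumw a x.1 := Finset.sum_insert hi
  -- x cannot be augmented by item i
  have h1 : 1 < sumw a x.1 + sumw b x.2 + a i := by
    by_contra hle
    push_neg at hle
    refine hnd ⟨(insert i x.1, x.2), ?_, ?_, le_refl _, Or.inl ?_⟩
    · show sumw a (insert i x.1) + sumw b x.2 ≤ 1
      rw [hins]; linarith
    · show sumw a x.1 ≤ sumw a (insert i x.1)
      rw [hins]; linarith
    · show sumw a x.1 < sumw a (insert i x.1)
      rw [hins]; linarith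
  -- so a i > 1 - z(x) > 1/2 > z(x) ≥ a(x)
  have hsing : sumw a ({i} : Finset (Fin n)) = a i := Finset.sum_singleton _ _
  have h2 : 1 < a i + sumw b x.2 := by
    by_contra hle
    push_neg at hle
    refine hnd ⟨(({i} : Finset (Fin n)), x.2), ?_, ?_, le_refl _, Or.inl ?_⟩
    · show sumw a ({i} : Finset (Fin n)) + sumw b x.2 ≤ 1
      rw [hsing]; linarith
    · show sumw a x.1 ≤ sumw a ({i} : Finset (Fin n))
      rw [hsing]; linarith
    · show sumw a x.1 < sumw a ({i} : Finset (Fin n))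
      rw [hsing]; linarith
  have := haα i
  linarith

set_option maxHeartbeats 1000000 in
/-- Key lemma: the asymmetric main case, in which all items of agent `B` outside
`x.2` have weight zero. -/
lemma ks_key {n m : ℕ} (α : ℝ) (hα0 : 2/3 ≤ α) (hα1 : α ≤ 1)
    (a : Fin n → ℝ) (b : Fin m → ℝ)
    (ha0 : ∀ i, 0 ≤ a i) (hb0 : ∀ i, 0 ≤ b i) (haα : ∀ i, a i ≤ α) (hbα : ∀ i, b i ≤ α)
    (htot : 1 < (∑ i, a i) + (∑ i, b i))
    (xopt : Finset (Fin n) × Finset (Fin m)) (hopt : SysOpt a b xopt)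
    (x : Finset (Fin n) × Finset (Fin m)) (hKS : KSFair a b x)
    (hnb : ∀ j, j ∉ x.2 → b j = 0)
    (habs : zv a b x < (1/α - 1) * zv a b xopt) : False := by
  have hαpos : 0 < α := by linarith
  obtain ⟨hxpar, ahat, bhat, hahat, hbhat, hag, hbg, hks⟩ := hKS
  have hxf : Feas a b x := hxpar.1
  have hxf' : sumw a x.1 + sumw b x.2 ≤ 1 := hxf
  have hof : Feas a b xopt := hopt.1
  have hof' : sumw a xopt.1 + sumw b xopt.2 ≤ 1 := hof
  -- nonnegativity
  have hA0 : 0 ≤ sumw a x.1 := Finset.sum_nonneg fun j _ => ha0 j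
  have hB0 : 0 ≤ sumw b x.2 := Finset.sum_nonneg fun j _ => hb0 j
  have hAs0 : 0 ≤ sumw a xopt.1 := Finset.sum_nonneg fun j _ => ha0 j
  have hBs0 : 0 ≤ sumw b xopt.2 := Finset.sum_nonneg fun j _ => hb0 j
  have hZeq : zv a b x = sumw a x.1 + sumw b x.2 := rfl
  have hZseq : zv a b xopt = sumw a xopt.1 + sumw b xopt.2 := rfl
  have hZ0 : 0 ≤ zv a b x := by rw [hZeq]; linarith
  have hZs1 : zv a b xopt ≤ 1 := by rw [hZseq]; linarith
  have hZs0 : 0 ≤ zv a b xopt := by rw [hZseq]; linarith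
  -- β = 1/α - 1 basic bounds
  have hβ0 : 0 ≤ 1/α - 1 := by
    have : 1 ≤ 1/α := by rw [le_div_iff₀ hαpos]; linarith
    linarith
  have hβhalf : 1/α - 1 ≤ 1/2 := by
    have : 1/α ≤ 3/2 := by rw [div_le_iff₀ hαpos]; linarith
    linarith
  have hβα : (1/α - 1) * α = 1 - α := by field_simp
  have hZspos : 0 < zv a b xopt := by
    by_contra hzc
    push_neg at hzc
    have : (1/α - 1) * zv a b xopt ≤ 0 := mul_nonpos_of_nonneg_of_nonpos hβ0 hzc
    linarith
  have hZhalf : zv a b x < 1/2 := by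
    have h' : (1/α - 1) * zv a b xopt ≤ (1/α - 1) * 1 :=
      mul_le_mul_of_nonneg_left hZs1 hβ0
    linarith
  -- hat bounds
  have hahat1 : ahat ≤ 1 := by
    obtain ⟨y, hyf, hyv⟩ := hag.1
    have hyf' : sumw a y.1 + sumw b y.2 ≤ 1 := hyf
    have : 0 ≤ sumw b y.2 := Finset.sum_nonneg fun j _ => hb0 j
    linarith
  have hAle : sumw a x.1 ≤ ahat := hag.2 ⟨x, hxf, rfl⟩
  have hBle : sumw b x.2 ≤ bhat := hbg.2 ⟨x, hxf, rfl⟩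
  have hAsle : sumw a xopt.1 ≤ ahat := hag.2 ⟨xopt, hof, rfl⟩
  have hBsle : sumw b xopt.2 ≤ bhat := hbg.2 ⟨xopt, hof, rfl⟩
  -- since all unselected b-items are zero, bhat = b(x)
  have hbhatB : bhat = sumw b x.2 := by
    obtain ⟨y, hyf, hyv⟩ := hbg.1
    have h1 : sumw b y.2 ≤ sumw b x.2 := by
      have hsub : y.2 ⊆ y.2 ∪ x.2 := Finset.subset_union_left
      have e1 : sumw b y.2 ≤ ∑ j ∈ y.2 ∪ x.2, b j :=
        Finset.sum_le_sum_of_subset_of_nonneg hsub (fun j _ _ => hb0 j)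
      have e2 : (y.2 ∪ x.2) = x.2 ∪ (y.2 \ x.2) := by
        rw [Finset.union_comm, Finset.union_sdiff_self_eq_union]
      have e3 : ∑ j ∈ y.2 ∪ x.2, b j = sumw b x.2 + ∑ j ∈ y.2 \ x.2, b j := by
        rw [e2, Finset.sum_union Finset.disjoint_sdiff]
        rfl
      have e4 : ∑ j ∈ y.2 \ x.2, b j = 0 :=
        Finset.sum_eq_zero fun j hj => hnb j (Finset.mem_sdiff.mp hj).2
      rw [e4, add_zero] at e3
      linarith
    rw [← hyv]
    exact le_antisymm h1 (hyv ▸ hBle)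
  have hBpos : 0 < sumw b x.2 := hbhatB ▸ hbhat
  -- the KS ratio
  obtain ⟨lam, hlamdef⟩ : ∃ l : ℝ, l = min (sumw a x.1 / ahat) (sumw b x.2 / bhat) :=
    ⟨_, rfl⟩
  have hks' : ∀ y, Feas a b y →
      min (sumw a y.1 / ahat) (sumw b y.2 / bhat) ≤ lam := by
    intro y hy
    rw [hlamdef]
    exact hks y hy
  have hlam0 : 0 ≤ lam := by
    rw [hlamdef]
    exact le_min (div_nonneg hA0 hahat.le) (div_nonneg hB0 hbhat.le)
  have hBr : sumw b x.2 / bhat = 1 := by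
    rw [hbhatB]; exact div_self (ne_of_gt hBpos)
  have hlam_eq : lam = sumw a x.1 / ahat := by
    rw [hlamdef]
    exact min_eq_left (by rw [hBr]; exact (div_le_one hahat).mpr hAle)
  have hAeq : lam * ahat = sumw a x.1 := by
    rw [hlam_eq]; exact div_mul_cancel₀ _ (ne_of_gt hahat)
  have hlamble : lam * bhat ≤ sumw b x.2 := by
    have h : lam ≤ sumw b x.2 / bhat := by
      rw [hlamdef]; exact min_le_right _ _
    calc lam * bhat ≤ (sumw b x.2 / bhat) * bhat :=
          mul_le_mul_of_nonneg_right h hbhat.le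
      _ = sumw b x.2 := div_mul_cancel₀ _ (ne_of_gt hbhat)
  -- lam < β
  have hlamlt : lam < 1/α - 1 := by
    have h1 : lam * (ahat + bhat) ≤ zv a b x := by
      rw [hZeq, mul_add]; linarith
    have h2 : zv a b xopt ≤ ahat + bhat := by rw [hZseq]; linarith
    have h3 : lam * zv a b xopt ≤ lam * (ahat + bhat) :=
      mul_le_mul_of_nonneg_left h2 hlam0
    by_contra hcc
    push_neg at hcc
    have h4 : (1/α - 1) * zv a b xopt ≤ lam * zv a b xopt :=
      mul_le_mul_of_nonneg_right hcc hZs0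
    linarith only [h1, h3, h4, habs]
  have hlam1 : lam < 1 := by linarith
  -- (†): any A-selection compatible with x.2 has value at most lam * ahat
  have hdagger : ∀ S : Finset (Fin n), (∑ i ∈ S, a i) + sumw b x.2 ≤ 1 →
      (∑ i ∈ S, a i) ≤ lam * ahat := by
    intro S hS
    have hfe : Feas a b (S, x.2) := by
      show sumw a S + sumw b x.2 ≤ 1
      exact hS
    have hy' := hks' (S, x.2) hfe
    rw [hBr] at hy'
    rcases min_le_iff.mp hy' with h | h
    · exact (div_le_iff₀ hahat).mp h
    · linarith
  -- existence of an unselected positive a-item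
  have hsumb : (∑ j, b j) = sumw b x.2 :=
    (Finset.sum_subset (Finset.subset_univ x.2) (fun j _ hj => hnb j hj)).symm
  have hsuma : sumw a x.1 + ∑ i ∈ x.1ᶜ, a i = ∑ i, a i :=
    Finset.sum_add_sum_compl x.1 a
  have hexa : ∃ i, i ∉ x.1 ∧ 0 < a i := by
    by_contra hcon
    push_neg at hcon
    have h1 : ∑ i ∈ x.1ᶜ, a i ≤ 0 :=
      Finset.sum_nonpos fun i hi => hcon i (Finset.mem_compl.mp hi)
    rw [hsumb] at htot
    linarith
  obtain ⟨i0, hi0, hai0⟩ := hexa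
  have hB1a : 1 - α < sumw b x.2 :=
    unselected_big α a b ha0 hb0 haα x hxpar hZhalf i0 hi0 hai0
  -- analysis of the optimal solution's A-part
  have hAs1 : sumw a xopt.1 ≤ 1 := by linarith
  by_cases hbig : ∃ w ∈ xopt.1, 1 - zv a b x < a w
  · -- there is a big item w in xopt.1
    obtain ⟨w, hwS, hwbig⟩ := hbig
    have honly : ∀ i ∈ xopt.1, i ≠ w → a i ≤ 1 - zv a b x := by
      intro i hi hne
      by_contra hcon
      push_neg at hcon
      have hsub : ({i, w} : Finset (Fin n)) ⊆ xopt.1 := by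
        intro j hj
        rcases Finset.mem_insert.mp hj with rfl | hj
        · exact hi
        · rw [Finset.mem_singleton.mp hj]; exact hwS
      have hpair : a i + a w ≤ sumw a xopt.1 := by
        have := Finset.sum_le_sum_of_subset_of_nonneg hsub (fun j _ _ => ha0 j)
        rw [Finset.sum_pair hne] at this
        exact this
      linarith
    have hRsum : a w + ∑ i ∈ xopt.1.erase w, a i = sumw a xopt.1 :=
      Finset.add_sum_erase _ a hwS
    have hR0 : 0 ≤ ∑ i ∈ xopt.1.erase w, a i := Finset.sum_nonneg fun j _ => ha0 j
    have hRle : (∑ i ∈ xopt.1.erase w, a i) ≤ lam * ahat := by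
      by_contra hcon
      push_neg at hcon
      obtain ⟨T, hTsub, h1, h2⟩ := sum_between a (1 - zv a b x) (lam * ahat)
        (mul_nonneg hlam0 hahat.le) (xopt.1.erase w) (fun j _ => ha0 j)
        (fun j hj => honly j (Finset.mem_of_mem_erase hj) (Finset.ne_of_mem_erase hj))
        hcon
      have hfe : (∑ i ∈ T, a i) + sumw b x.2 ≤ 1 := by
        rw [hZeq] at h2
        linarith only [h2, hAeq]
      exact absurd (hdagger T hfe) (not_le.mpr h1)
    -- (‡): b* ≤ lam * bhat via the candidate ({w}, xopt.2)
    have hwAs : a w ≤ sumw a xopt.1 := by linarith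
    have hsingw : sumw a ({w} : Finset (Fin n)) = a w := Finset.sum_singleton _ _
    have hfew : Feas a b (({w} : Finset (Fin n)), xopt.2) := by
      show sumw a ({w} : Finset (Fin n)) + sumw b xopt.2 ≤ 1
      rw [hsingw]; linarith
    have hksw := hks' (({w} : Finset (Fin n)), xopt.2) hfew
    have hksw' : min (a w / ahat) (sumw b xopt.2 / bhat) ≤ lam := by
      rw [← hsingw]; exact hksw
    have hwhalf : 1/2 < a w := by linarith
    have hwratio : lam < a w / ahat := by
      have h1 : a w ≤ a w / ahat := by
        rw [le_div_iff₀ hahat]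
        calc a w * ahat ≤ a w * 1 := mul_le_mul_of_nonneg_left hahat1 (ha0 w)
          _ = a w := mul_one _
      linarith
    have hBslam : sumw b xopt.2 ≤ lam * bhat := by
      rcases min_le_iff.mp hksw' with h | h
      · linarith
      · exact (div_le_iff₀ hbhat).mp h
    -- lower bound on ahat
    have hahatlb : 1 - (1/α - 1) ≤ ahat := by
      have h1 : zv a b x < 1/α - 1 := by
        have h' : (1/α - 1) * zv a b xopt ≤ (1/α - 1) * 1 :=
          mul_le_mul_of_nonneg_left hZs1 hβ0
        linarith
      linarith
    -- final contradiction
    have hAs_ub : sumw a xopt.1 ≤ α + lam * ahat := by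
      have := haα w
      linarith
    have hZsub : zv a b xopt ≤ α + lam * ahat + lam * (sumw b x.2) := by
      have hBslam' : sumw b xopt.2 ≤ lam * sumw b x.2 := by
        rw [← hbhatB]; exact hBslam
      rw [hZseq]; linarith only [hAs_ub, hBslam']
    have hzx2 : zv a b x = lam * ahat + sumw b x.2 := by
      rw [hZeq, hAeq]
    have key1 : lam * ahat * (1 - (1/α - 1)) + (sumw b x.2) * (1 - (1/α - 1) * lam)
        - (1 - α) ≤ zv a b x - (1/α - 1) * zv a b xopt := by
      have hmul : (1/α - 1) * zv a b xopt ≤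
          (1/α - 1) * (α + lam * ahat + lam * (sumw b x.2)) :=
        mul_le_mul_of_nonneg_left hZsub hβ0
      have hexp : (1/α - 1) * (α + lam * ahat + lam * (sumw b x.2)) =
          (1 - α) + (1/α - 1) * lam * ahat + (1/α - 1) * lam * (sumw b x.2) := by
        linear_combination hβα
      rw [hzx2]
      linarith only [hmul, hexp]
    have key2 : 0 ≤ lam * ahat * (1 - (1/α - 1)) + (sumw b x.2) * (1 - (1/α - 1) * lam)
        - (1 - α) := by
      have hbl : 0 ≤ 1 - (1/α - 1) := by linarith
      have h1 : lam * (1 - (1/α - 1)) * (1 - (1/α - 1)) ≤ lam * ahat * (1 - (1/α - 1)) := by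
        have : lam * (1 - (1/α - 1)) ≤ lam * ahat :=
          mul_le_mul_of_nonneg_left hahatlb hlam0
        exact mul_le_mul_of_nonneg_right this hbl
      have hβlam : (1/α - 1) * lam ≤ 1/2 * (1/2) :=
        mul_le_mul hβhalf (by linarith) hlam0 (by norm_num)
      have h2 : (1 - α) * (1 - (1/α - 1) * lam) ≤ (sumw b x.2) * (1 - (1/α - 1) * lam) := by
        apply mul_le_mul_of_nonneg_right (le_of_lt hB1a)
        linarith only [hβlam]
      -- remaining: 0 ≤ lam * ((1-β)^2 - (1-α) * β)
      have h3 : 0 ≤ lam * ((1 - (1/α - 1)) * (1 - (1/α - 1)) - (1 - α) * (1/α - 1)) := by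
        apply mul_nonneg hlam0
        have e1 : 0 ≤ (1/2 - (1/α - 1)) * (3/2 - (1/α - 1)) :=
          mul_nonneg (by linarith) (by linarith)
        have e2 : (1 - α) * (1/α - 1) ≤ (1/3) * (1/2) :=
          mul_le_mul (by linarith) hβhalf hβ0 (by norm_num)
        linarith only [e1, e2]
      linarith only [h1, h2, h3]
    linarith only [key1, key2, habs]
  · -- no big item in xopt.1
    push_neg at hbig
    by_cases hAs : sumw a xopt.1 ≤ lam * ahat
    · have hZsle : zv a b xopt ≤ zv a b x := by
        have hBsle' : sumw b xopt.2 ≤ sumw b x.2 := hbhatB ▸ hBsle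
        rw [hZseq, hZeq]
        linarith only [hBsle', hAs, hAeq]
      have h' : (1/α - 1) * zv a b xopt ≤ (1/2) * zv a b xopt :=
        mul_le_mul_of_nonneg_right hβhalf hZs0
      linarith only [h', hZsle, habs, hZspos]
    · push_neg at hAs
      obtain ⟨T, hTsub, h1, h2⟩ := sum_between a (1 - zv a b x) (lam * ahat)
        (mul_nonneg hlam0 hahat.le) xopt.1 (fun j _ => ha0 j) hbig hAs
      have hfe : (∑ i ∈ T, a i) + sumw b x.2 ≤ 1 := by
        rw [hZeq] at h2
        linarith only [h2, hAeq]
      exact absurd (hdagger T hfe) (not_le.mpr h1)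

/-- For `2/3 ≤ α ≤ 1`, every Kalai–Smorodinski fair solution of an FSSP instance
with separate item sets and item weights at most `α` satisfies
`z* - z(x_KS) ≤ (2 - 1/α) · z*`. -/
theorem pof_ks_large_alpha (α : ℝ) (hα0 : 2/3 ≤ α) (hα1 : α ≤ 1)
    {n m : ℕ} (a : Fin n → ℝ) (b : Fin m → ℝ) (hinst : ValidInst a b α)
    (xopt : Finset (Fin n) × Finset (Fin m)) (hopt : SysOpt a b xopt)
    (xKS : Finset (Fin n) × Finset (Fin m)) (hKS : KSFair a b xKS) :
    zv a b xopt - zv a b xKS ≤ (2 - 1/α) * zv a b xopt := by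
  by_contra hcon
  push_neg at hcon
  obtain ⟨ha0, hb0, haα, hbα, htot⟩ := hinst
  have hαpos : 0 < α := by linarith
  have habs : zv a b xKS < (1/α - 1) * zv a b xopt := by
    have : (1/α - 1) * zv a b xopt = zv a b xopt - (2 - 1/α) * zv a b xopt := by ring
    linarith
  have hZeq : zv a b xKS = sumw a xKS.1 + sumw b xKS.2 := rfl
  have hZseq : zv a b xopt = sumw a xopt.1 + sumw b xopt.2 := rfl
  have hA0 : 0 ≤ sumw a xKS.1 := Finset.sum_nonneg fun j _ => ha0 j
  have hB0 : 0 ≤ sumw b xKS.2 := Finset.sum_nonneg fun j _ => hb0 j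
  have hAs0 : 0 ≤ sumw a xopt.1 := Finset.sum_nonneg fun j _ => ha0 j
  have hBs0 : 0 ≤ sumw b xopt.2 := Finset.sum_nonneg fun j _ => hb0 j
  have hof' : sumw a xopt.1 + sumw b xopt.2 ≤ 1 := hopt.1
  have hZs1 : zv a b xopt ≤ 1 := by rw [hZseq]; linarith
  have hβ0 : 0 ≤ 1/α - 1 := by
    have : 1 ≤ 1/α := by rw [le_div_iff₀ hαpos]; linarith
    linarith
  have hβhalf : 1/α - 1 ≤ 1/2 := by
    have : 1/α ≤ 3/2 := by rw [div_le_iff₀ hαpos]; linarith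
    linarith
  have hZhalf : zv a b xKS < 1/2 := by
    have h' : (1/α - 1) * zv a b xopt ≤ (1/α - 1) * 1 :=
      mul_le_mul_of_nonneg_left hZs1 hβ0
    linarith
  by_cases hPB : ∀ j, j ∉ xKS.2 → b j = 0
  · exact ks_key α hα0 hα1 a b ha0 hb0 haα hbα htot xopt hopt xKS hKS hPB habs
  by_cases hPA : ∀ i, i ∉ xKS.1 → a i = 0
  · -- swap the roles of the agents
    have hks' := KSFair_swap hKS
    have hopt' := SysOpt_swap hopt
    have e1 : zv b a (xKS.2, xKS.1) = zv a b xKS := add_comm (sumw b xKS.2) (sumw a xKS.1)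
    have e2 : zv b a (xopt.2, xopt.1) = zv a b xopt :=
      add_comm (sumw b xopt.2) (sumw a xopt.1)
    have habs' : zv b a (xKS.2, xKS.1) < (1/α - 1) * zv b a (xopt.2, xopt.1) := by
      rw [e1, e2]; exact habs
    exact ks_key α hα0 hα1 b a hb0 ha0 hbα haα (by linarith) (xopt.2, xopt.1) hopt'
      (xKS.2, xKS.1) hks' hPA habs'
  · -- both agents have unselected positive items
    push_neg at hPA hPB
    obtain ⟨i, hi, hai⟩ := hPA
    obtain ⟨j, hj, hbj⟩ := hPB
    have haipos : 0 < a i := lt_of_le_of_ne (ha0 i) (Ne.symm hai)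
    have hbjpos : 0 < b j := lt_of_le_of_ne (hb0 j) (Ne.symm hbj)
    have hB : 1 - α < sumw b xKS.2 :=
      unselected_big α a b ha0 hb0 haα xKS hKS.1 hZhalf i hi haipos
    have hZswap : zv b a (xKS.2, xKS.1) < 1/2 := by
      have e1 : zv b a (xKS.2, xKS.1) = zv a b xKS := add_comm (sumw b xKS.2) (sumw a xKS.1)
      rw [e1]; exact hZhalf
    have hA : 1 - α < sumw a xKS.1 :=
      unselected_big α b a hb0 ha0 hbα (xKS.2, xKS.1) (Pareto_swap hKS.1) hZswap j hj hbjpos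
    have h3 : 1/α ≤ 3 - 2*α := by
      rw [div_le_iff₀ hαpos]
      have e1 : 0 ≤ (2*α - 1) * (1 - α) := mul_nonneg (by linarith) (by linarith)
      linarith [e1]
    have hub : (1/α - 1) * zv a b xopt ≤ 1/α - 1 := by
      have h' : (1/α - 1) * zv a b xopt ≤ (1/α - 1) * 1 :=
        mul_le_mul_of_nonneg_left hZs1 hβ0
      linarith
    linarith
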